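/- arXiv:2301.00292 — 3 statements merged into one kernel-verified Lean document; each statement's English description precedes it below -/
import Mathlib

section
/- If for each covariate j with nonempty active set K_j and each unit n in K_j the p-value p_j^(n) satisfies P(p_j^(n) ≤ x) ≤ x for all x ≥ 0 under the null, then the rejection rule 'reject H_{0,j} if min_{n∈K_j} p_j^(n) ≤ ρ·γ/N_j' has family-wise error rate at most γ, where N_j = Σ_{n∈K_j} |M_n| and ρ = (Σ_{j:K_j≠∅} |K_j|/N_j)^{-1}. -/
open MeasureTheory Finset

/-- **Panel FWER control (Theorem: FWER control).**
There are `N` units and `J` covariates; `M n` is the active set of unit `n`,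
`K j = {n : j ∈ M n}` the active units of covariate `j`, `Nj j = ∑_{n ∈ K j} |M n|`
the simultaneity count, and `ρ = (∑_{j : K j ≠ ∅} |K j| / Nj j)⁻¹` the panel cohesion
coefficient.  If each active p-value is super-uniform under the null, then the rule
rejecting covariate `j` when `min_{n ∈ K j} p_j^(n) ≤ ρ·γ/Nj j` has FWER at most `γ`. -/
theorem panel_posi_fwer_control
    {Ω : Type*} [MeasurableSpace Ω] (μ : Measure Ω) [IsProbabilityMeasure μ]
    (N J : ℕ) (M : Fin N → Finset (Fin J))
    (p : Fin J → Fin N → Ω → ℝ) (γ : ℝ) (hγ : 0 ≤ γ)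
    (K : Fin J → Finset (Fin N))
    (hK : ∀ j, K j = Finset.univ.filter (fun n => j ∈ M n))
    (Nj : Fin J → ℝ)
    (hNj : ∀ j, Nj j = ∑ n ∈ K j, ((M n).card : ℝ))
    (ρ : ℝ)
    (hρ : ρ = (∑ j ∈ Finset.univ.filter (fun j => (K j).Nonempty),
        ((K j).card : ℝ) / Nj j)⁻¹)
    (hvalid : ∀ j, ∀ n ∈ K j, ∀ x : ℝ, 0 ≤ x →
        μ {ω | p j n ω ≤ x} ≤ ENNReal.ofReal x) :
    μ {ω | ∃ j, ∃ n ∈ K j, p j n ω ≤ ρ * γ / Nj j} ≤ ENNReal.ofReal γ := by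
  set S := Finset.univ.filter (fun j => (K j).Nonempty) with hS
  -- basic positivity facts
  have hNj_pos : ∀ j ∈ S, 0 < Nj j := by
    intro j hj
    rw [hS, Finset.mem_filter] at hj
    obtain ⟨n, hn⟩ := hj.2
    rw [hNj]
    apply Finset.sum_pos
    · intro i hi
      have : j ∈ M i := by
        have := hK j ▸ hi
        simpa [Finset.mem_filter] using this
      have : 0 < (M i).card := Finset.card_pos.mpr ⟨j, this⟩
      exact_mod_cast this
    · exact ⟨n, hn⟩
  have hsum_nonneg : 0 ≤ ∑ j ∈ S, ((K j).card : ℝ) / Nj j := by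
    apply Finset.sum_nonneg
    intro j hj
    exact div_nonneg (Nat.cast_nonneg _) (hNj_pos j hj).le
  have hρ_nonneg : 0 ≤ ρ := by rw [hρ]; exact inv_nonneg.mpr hsum_nonneg
  have hc_nonneg : ∀ j, 0 ≤ ρ * γ / Nj j ∨ Nj j < 0 := fun j => by
    rcases le_or_gt 0 (Nj j) with h | h
    · exact Or.inl (div_nonneg (mul_nonneg hρ_nonneg hγ) h)
    · exact Or.inr h
  -- the event is contained in a union over S
  have hsub : {ω | ∃ j, ∃ n ∈ K j, p j n ω ≤ ρ * γ / Nj j} ⊆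
      ⋃ j ∈ S, ⋃ n ∈ K j, {ω | p j n ω ≤ ρ * γ / Nj j} := by
    intro ω hω
    obtain ⟨j, n, hn, hp⟩ := hω
    have hjS : j ∈ S := by
      rw [hS, Finset.mem_filter]
      exact ⟨Finset.mem_univ _, ⟨n, hn⟩⟩
    simp only [Set.mem_iUnion]
    exact ⟨j, hjS, n, hn, hp⟩
  refine le_trans (measure_mono hsub) ?_
  refine le_trans (measure_biUnion_finset_le S _) ?_
  have hstep : ∀ j ∈ S, μ (⋃ n ∈ K j, {ω | p j n ω ≤ ρ * γ / Nj j})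
      ≤ ENNReal.ofReal (((K j).card : ℝ) * (ρ * γ / Nj j)) := by
    intro j hj
    refine le_trans (measure_biUnion_finset_le (K j) _) ?_
    have hcj : 0 ≤ ρ * γ / Nj j :=
      div_nonneg (mul_nonneg hρ_nonneg hγ) (hNj_pos j hj).le
    calc ∑ n ∈ K j, μ {ω | p j n ω ≤ ρ * γ / Nj j}
        ≤ ∑ n ∈ K j, ENNReal.ofReal (ρ * γ / Nj j) := by
          apply Finset.sum_le_sum
          intro n hn
          exact hvalid j n hn _ hcj
      _ = ((K j).card : ENNReal) * ENNReal.ofReal (ρ * γ / Nj j) := by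
          rw [Finset.sum_const, nsmul_eq_mul]
      _ = ENNReal.ofReal (((K j).card : ℝ) * (ρ * γ / Nj j)) := by
          rw [ENNReal.ofReal_mul (Nat.cast_nonneg _), ENNReal.ofReal_natCast]
  refine le_trans (Finset.sum_le_sum hstep) ?_
  rw [← ENNReal.ofReal_sum_of_nonneg (fun j hj =>
    mul_nonneg (Nat.cast_nonneg _)
      (div_nonneg (mul_nonneg hρ_nonneg hγ) (hNj_pos j hj).le))]
  apply ENNReal.ofReal_le_ofReal
  -- real arithmetic
  have : ∑ j ∈ S, ((K j).card : ℝ) * (ρ * γ / Nj j)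
      = ρ * γ * ∑ j ∈ S, ((K j).card : ℝ) / Nj j := by
    rw [Finset.mul_sum]
    apply Finset.sum_congr rfl
    intro j hj
    field_simp
  rw [this]
  rcases eq_or_lt_of_le hsum_nonneg with h0 | hpos
  · rw [← h0, mul_zero]; exact hγ
  · rw [hρ, mul_comm (_)⁻¹ γ, mul_assoc, inv_mul_cancel₀ hpos.ne', mul_one]
end

section
/- Let U_(1) ≤ ... ≤ U_(m) be the order statistics of m i.i.d. Uniform[0,1] random variables. Then for any γ ∈ (0,1), P(∃ k : U_(k) ≤ γ·k/m) ≤ γ (Simes-type step-down bound used in the ordered FWER control). -/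
open MeasureTheory ProbabilityTheory
open scoped ENNReal
open Finset Set Function

/-!
With `c = γ / m`, all order statistics lie strictly above the line `k ↦ c k` iff
`#{i | U i ≤ c (k+1)} ≤ k` for every `k`. By independence and uniformity the probability of this
event is the volume of the set `aboveLine m c 1` of such points of the unit cube, so it suffices to
show that this volume is at least `1 - c m`.

More generally `vol (aboveLine n c u) ≥ uⁿ - c n uⁿ⁻¹`, by induction on `n`. Split
`[0, u)ⁿ⁺¹` according to which coordinate is the largest, say with value `v`: the point is above
the line as soon as `v > c (n+1)` and the remaining coordinates form a point of `aboveLine n c v`. Integrating the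
induction hypothesis over `v ∈ (c (n+1), u)` gives
`(n+1) ∫ (vⁿ - c n vⁿ⁻¹) dv = uⁿ⁺¹ - c (n+1) uⁿ`, since the antiderivative
`(vⁿ⁺¹ - c (n+1) vⁿ) / (n+1)` vanishes at `c (n+1)`.
-/

lemma one_sub_ofReal_one_sub_le (γ : ℝ) : 1 - ENNReal.ofReal (1 - γ) ≤ ENNReal.ofReal γ :=
  tsub_le_iff_right.2 <| by simpa using ENNReal.ofReal_add_le (p := γ) (q := 1 - γ)

lemma setLIntegral_Ioo_ofReal_eq_sub {f F : ℝ → ℝ} {a b : ℝ} (hab : a ≤ b)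
    (hF : ∀ x ∈ Icc a b, HasDerivAt F (f x) x) (hf : ContinuousOn f (Icc a b))
    (hf0 : ∀ x ∈ Ioo a b, 0 ≤ f x) :
    ∫⁻ x in Ioo a b, ENNReal.ofReal (f x) = ENNReal.ofReal (F b - F a) := by
  rw [← ofReal_integral_eq_lintegral_ofReal (hf.integrableOn_Icc.mono_set Ioo_subset_Icc_self)
    ((ae_restrict_iff' measurableSet_Ioo).2 (ae_of_all _ hf0)), ← integral_Ioc_eq_integral_Ioo,
    ← intervalIntegral.integral_of_le hab, intervalIntegral.integral_eq_sub_of_hasDerivAt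
      (by rwa [uIcc_of_le hab]) (hf.intervalIntegrable_of_Icc hab)]

namespace Simes

variable {n : ℕ}

noncomputable def countLE (x : Fin n → ℝ) (t : ℝ) : ℕ := #{i | x i ≤ t}

lemma countLE_le (x : Fin n → ℝ) (t : ℝ) : countLE x t ≤ n :=
  (card_filter_le _ _).trans_eq (card_fin n)

lemma countLE_eq_of_lt (x : Fin (n + 1) → ℝ) {i : Fin (n + 1)} {t : ℝ} (ht : t < x i) :
    countLE x t = countLE (fun j => x (i.succAbove j)) t := by
  simp only [countLE, card_filter]
  rw [Fin.sum_univ_succAbove _ i, if_neg ht.not_ge, zero_add]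

lemma measurable_countLE (t : ℝ) : Measurable fun x : Fin n → ℝ => countLE x t := by
  simp only [countLE, card_filter]
  exact Finset.measurable_sum _ fun i _ =>
    Measurable.ite (measurableSet_le (measurable_pi_apply i) measurable_const)
      measurable_const measurable_const

lemma countLE_comp_perm (x : Fin n → ℝ) (σ : Equiv.Perm (Fin n)) (t : ℝ) :
    countLE (x ∘ σ) t = countLE x t := by
  simp only [countLE, card_filter]
  exact Equiv.sum_comp σ fun i => if x i ≤ t then 1 else 0

lemma apply_sort_le_iff_lt_countLE (x : Fin n → ℝ) (k : Fin n) (t : ℝ) :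
    x (Tuple.sort x k) ≤ t ↔ (k : ℕ) < countLE x t := by
  rw [← countLE_comp_perm x (Tuple.sort x)]
  exact (Tuple.lt_card_le_iff_apply_le_of_monotone (Tuple.monotone_sort x)).symm

/-- The points of `[0, u)ⁿ` whose order statistics stay strictly above the line `k ↦ c k`:
the `(k+1)`-th smallest coordinate exceeds `c (k+1)` iff at most `k` coordinates are `≤ c (k+1)`. -/
def aboveLine (n : ℕ) (c u : ℝ) : Set (Fin n → ℝ) :=
  {x | (∀ i, x i ∈ Ico 0 u) ∧ ∀ k : Fin n, countLE x (c * (k + 1)) ≤ k}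

lemma aboveLine_subset_pi_Icc {c u : ℝ} : aboveLine n c u ⊆ univ.pi fun _ => Icc 0 u :=
  fun _ hx i _ => Ico_subset_Icc_self (hx.1 i)

lemma measurableSet_setOf_mem_aboveLine (c : ℝ) :
    MeasurableSet {p : ℝ × (Fin n → ℝ) | p.2 ∈ aboveLine n c p.1} := by
  refine measurableSet_setOfPred.2 (.and (.forall fun i => .and ?_ ?_) (.forall fun k => ?_)) <;>
    refine measurableSet_setOfPred.1 ?_
  · exact measurableSet_le measurable_const measurable_snd.eval
  · exact measurableSet_lt measurable_snd.eval measurable_fst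
  · exact measurableSet_le ((measurable_countLE _).comp measurable_snd) measurable_const

lemma measurableSet_aboveLine (c u : ℝ) : MeasurableSet (aboveLine n c u) :=
  measurable_prodMk_left (measurableSet_setOf_mem_aboveLine c)

lemma measurableSet_setOf_exists_sort_le (c : ℝ) :
    MeasurableSet {x : Fin n → ℝ | ∃ k : Fin n, x (Tuple.sort x k) ≤ c * (k + 1)} := by
  simp only [apply_sort_le_iff_lt_countLE]
  exact measurableSet_setOfPred.2 <| .exists fun k =>
    measurableSet_setOfPred.1 <| measurableSet_lt measurable_const (measurable_countLE _)

lemma setOf_exists_sort_le_subset_compl_aboveLine (c u : ℝ) :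
    {x : Fin n → ℝ | ∃ k : Fin n, x (Tuple.sort x k) ≤ c * (k + 1)} ⊆ (aboveLine n c u)ᶜ :=
  fun x ⟨k, hk⟩ hx => (hx.2 k).not_gt ((apply_sort_le_iff_lt_countLE x k _).1 hk)

variable {c : ℝ}

lemma mem_aboveLine_succ (hc : 0 ≤ c) {u : ℝ} {x : Fin (n + 1) → ℝ} {i : Fin (n + 1)}
    (hxi : x i ∈ Ioo (c * (n + 1)) u)
    (hx : (fun j => x (i.succAbove j)) ∈ aboveLine n c (x i)) :
    x ∈ aboveLine (n + 1) c u := by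
  obtain ⟨hlow, hup⟩ := hxi
  obtain ⟨hrange, hcount⟩ := hx
  refine ⟨fun i' => ?_, fun k => ?_⟩
  · rcases eq_or_ne i' i with rfl | hne
    · exact ⟨(by positivity : 0 ≤ c * (n + 1)).trans hlow.le, hup⟩
    · obtain ⟨j, rfl⟩ := Fin.exists_succAbove_eq hne
      exact ⟨(hrange j).1, (hrange j).2.trans hup⟩
  · have hk : c * ((k : ℕ) + 1) < x i := by
      refine lt_of_le_of_lt (mul_le_mul_of_nonneg_left ?_ hc) hlow
      gcongr
      exact_mod_cast k.is_le
    rw [countLE_eq_of_lt x hk]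
    rcases (Fin.is_le k).lt_or_eq with hlt | heq
    · exact hcount ⟨k, hlt⟩
    · rw [heq]
      exact countLE_le _ _

lemma setLIntegral_volume_aboveLine_le (hc : 0 ≤ c) (u : ℝ) (i : Fin (n + 1)) :
    ∫⁻ v in Ioo (c * (n + 1)) u, volume (aboveLine n c v) ≤
      volume (aboveLine (n + 1) c u ∩ {x | ∀ j, x (i.succAbove j) < x i}) := by
  set B : Set (ℝ × (Fin n → ℝ)) := {p | p.1 ∈ Ioo (c * (n + 1)) u ∧ p.2 ∈ aboveLine n c p.1}
  have hB : MeasurableSet B :=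
    (measurable_fst measurableSet_Ioo).inter (measurableSet_setOf_mem_aboveLine c)
  have hslices : volume B = ∫⁻ v in Ioo (c * (n + 1)) u, volume (aboveLine n c v) := by
    rw [Measure.volume_eq_prod, Measure.prod_apply hB, ← lintegral_indicator measurableSet_Ioo]
    refine lintegral_congr fun v => ?_
    by_cases hv : v ∈ Ioo (c * (n + 1)) u
    · rw [indicator_of_mem hv]
      exact congrArg volume (ext fun y => and_iff_right hv)
    · rw [indicator_of_notMem hv]
      exact measure_mono_null (fun y hy => hv hy.1) measure_empty
  let e := MeasurableEquiv.piFinSuccAbove (fun _ => ℝ) i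
  calc ∫⁻ v in Ioo (c * (n + 1)) u, volume (aboveLine n c v)
      = volume (e ⁻¹' B) := by
        rw [(volume_preserving_piFinSuccAbove (fun _ => ℝ) i).measure_preimage
          hB.nullMeasurableSet, hslices]
    _ ≤ _ := by
      refine measure_mono fun x (hx : e x ∈ B) => ?_
      exact ⟨mem_aboveLine_succ hc hx.1 hx.2, fun j => (hx.2.1 j).2⟩

lemma mul_setLIntegral_volume_aboveLine_le (hc : 0 ≤ c) (u : ℝ) :
    (n + 1) * ∫⁻ v in Ioo (c * (n + 1)) u, volume (aboveLine n c v) ≤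
      volume (aboveLine (n + 1) c u) := by
  let sector (i : Fin (n + 1)) : Set (Fin (n + 1) → ℝ) := {x | ∀ j, x (i.succAbove j) < x i}
  have hsector (i) : MeasurableSet (sector i) :=
    measurableSet_setOfPred.2 <| .forall fun j => measurableSet_setOfPred.1 <|
      measurableSet_lt (measurable_pi_apply _) (measurable_pi_apply i)
  have hdisj : Pairwise (Disjoint on sector) := by
    intro i i' hne
    refine Set.disjoint_left.2 fun x hx hx' => ?_
    obtain ⟨j, hj⟩ := Fin.exists_succAbove_eq hne.symm
    obtain ⟨j', hj'⟩ := Fin.exists_succAbove_eq hne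
    exact (hx j).not_gt (hj ▸ hj' ▸ hx' j')
  calc (n + 1) * ∫⁻ v in Ioo (c * (n + 1)) u, volume (aboveLine n c v)
      = ∑ _i : Fin (n + 1), ∫⁻ v in Ioo (c * (n + 1)) u, volume (aboveLine n c v) := by
        simp
    _ ≤ ∑ i, volume.restrict (aboveLine (n + 1) c u) (sector i) := by
        gcongr with i
        rw [Measure.restrict_apply (hsector i), inter_comm]
        exact setLIntegral_volume_aboveLine_le hc u i
    _ ≤ volume.restrict (aboveLine (n + 1) c u) univ :=
        sum_measure_le_measure_univ (fun i _ => (hsector i).nullMeasurableSet)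
          fun i _ i' _ hne => (hdisj hne).aedisjoint
    _ = volume (aboveLine (n + 1) c u) := by simp

lemma setLIntegral_Ioo_ofReal_pow_sub (hc : 0 ≤ c) {u : ℝ} (hu : c * (n + 1) ≤ u) :
    ∫⁻ v in Ioo (c * (n + 1)) u, ENNReal.ofReal (v ^ n - c * n * v ^ (n - 1)) =
      ENNReal.ofReal ((u ^ (n + 1) - c * (n + 1) * u ^ n) / (n + 1)) := by
  have hn : (n : ℝ) + 1 ≠ 0 := by positivity
  rw [setLIntegral_Ioo_ofReal_eq_sub (F := fun v => v ^ (n + 1) / (n + 1) - c * v ^ n) hu]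
  · congr 1
    field_simp
    ring
  · intro v _
    refine (((hasDerivAt_pow (n + 1) v).div_const ((n : ℝ) + 1)).sub
      ((hasDerivAt_pow n v).const_mul c)).congr_deriv ?_
    rw [Nat.add_sub_cancel]
    push_cast
    field_simp
  · fun_prop
  · intro v ⟨hav, _⟩
    have hv : 0 ≤ v := (by positivity : 0 ≤ c * (n + 1)).trans hav.le
    rcases n with _ | k
    · simp
    · rw [Nat.add_sub_cancel, pow_succ]
      push_cast at hav ⊢
      nlinarith [pow_nonneg hv k]

theorem ofReal_le_volume_aboveLine (hc : 0 ≤ c) (n : ℕ) {u : ℝ} (hu : 0 ≤ u) :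
    ENNReal.ofReal (u ^ n - c * n * u ^ (n - 1)) ≤ volume (aboveLine n c u) := by
  induction n generalizing u with
  | zero =>
    rw [show aboveLine 0 c u = univ from eq_univ_of_forall fun x => ⟨finZeroElim, finZeroElim⟩]
    simp [volume_pi]
  | succ n ih =>
    rw [Nat.add_sub_cancel]
    push_cast
    rcases le_or_gt (c * (n + 1)) u with hau | hua
    · calc ENNReal.ofReal (u ^ (n + 1) - c * (n + 1) * u ^ n)
          = (n + 1) * ENNReal.ofReal ((u ^ (n + 1) - c * (n + 1) * u ^ n) / (n + 1)) := by
            rw [show ((n : ℝ≥0∞) + 1) = ENNReal.ofReal (n + 1) by norm_cast,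
              ← ENNReal.ofReal_mul (by positivity), mul_div_cancel₀ _ (by positivity)]
        _ = (n + 1) *
            ∫⁻ v in Ioo (c * (n + 1)) u, ENNReal.ofReal (v ^ n - c * n * v ^ (n - 1)) := by
            rw [setLIntegral_Ioo_ofReal_pow_sub hc hau]
        _ ≤ (n + 1) * ∫⁻ v in Ioo (c * (n + 1)) u, volume (aboveLine n c v) := by
            gcongr _ * ?_
            exact setLIntegral_mono' measurableSet_Ioo fun v hv =>
              ih ((by positivity : 0 ≤ c * (n + 1)).trans hv.1.le)
        _ ≤ volume (aboveLine (n + 1) c u) := mul_setLIntegral_volume_aboveLine_le hc u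
    · have : u ^ (n + 1) - c * (n + 1) * u ^ n ≤ 0 := by
        have := mul_nonneg (pow_nonneg hu n) (sub_nonneg.2 hua.le)
        rw [pow_succ]
        linarith
      simp [ENNReal.ofReal_eq_zero.2 this]

lemma ofReal_one_sub_le_volume_aboveLine {γ : ℝ} (hγ : 0 ≤ γ) (m : ℕ) :
    ENNReal.ofReal (1 - γ) ≤ volume (aboveLine m (γ / m) 1) := by
  have hγm : γ / m * m ≤ γ := by
    rcases eq_or_ne (m : ℝ) 0 with hm | hm
    · simp [hm, hγ]
    · rw [div_mul_cancel₀ γ hm]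
  refine le_trans (ENNReal.ofReal_le_ofReal ?_)
    (ofReal_le_volume_aboveLine (by positivity) m zero_le_one)
  simp only [one_pow, mul_one]
  linarith

end Simes

open Simes in
theorem simes_stepdown_bound_general
    {Ω : Type*} [MeasurableSpace Ω] (μ : Measure Ω)
    (m : ℕ) (U : Fin m → Ω → ℝ)
    (hindep : iIndepFun U μ)
    (hunif : ∀ i, μ.map (U i) = (volume : Measure ℝ).restrict (Set.Icc 0 1))
    (γ : ℝ) (hγ0 : 0 < γ) :
    μ {ω | ∃ k : Fin m,
        (fun i => U i ω) (Tuple.sort (fun i => U i ω) k)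
          ≤ γ * ((k.val : ℝ) + 1) / (m : ℝ)} ≤ ENNReal.ofReal γ := by
  have hU (i) : AEMeasurable (U i) μ :=
    .of_map_ne_zero (by simp [hunif i, Measure.restrict_eq_zero])
  have hT := aemeasurable_pi_lambda _ hU
  have := hindep.isProbabilityMeasure
  have := Measure.isProbabilityMeasure_map hT
  have hlaw : μ.map (fun ω i => U i ω) = volume.restrict (univ.pi fun _ => Icc 0 1) := by
    rw [hindep.map_fun_eq_pi_map hU, funext hunif, volume_pi, Measure.restrict_pi_pi]
  simp only [mul_div_right_comm]
  change μ ((fun ω i => U i ω) ⁻¹'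
    {x : Fin m → ℝ | ∃ k : Fin m, x (Tuple.sort x k) ≤ γ / m * (k + 1)}) ≤ _
  rw [← Measure.map_apply_of_aemeasurable hT (measurableSet_setOf_exists_sort_le _)]
  calc _ ≤ μ.map (fun ω i => U i ω) (aboveLine m (γ / m) 1)ᶜ :=
        measure_mono (setOf_exists_sort_le_subset_compl_aboveLine _ _)
    _ = 1 - volume (aboveLine m (γ / m) 1) := by
        rw [prob_compl_eq_one_sub (measurableSet_aboveLine _ _), hlaw,
          Measure.restrict_eq_self _ aboveLine_subset_pi_Icc]
    _ ≤ 1 - ENNReal.ofReal (1 - γ) :=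
        tsub_le_tsub_left (ofReal_one_sub_le_volume_aboveLine hγ0.le m) 1
    _ ≤ ENNReal.ofReal γ := one_sub_ofReal_one_sub_le γ

/-- **Simes-type step-down bound.**
Let `U_(1) ≤ … ≤ U_(m)` be the order statistics (obtained via `Tuple.sort`, with
0-based index `k` denoting the `(k+1)`-th smallest value) of `m` i.i.d. Uniform[0,1]
random variables.  Then for every `γ ∈ (0,1)`,
`P(∃ k, U_(k) ≤ γ·k/m) ≤ γ`. -/
theorem simes_stepdown_bound
    {Ω : Type*} [MeasurableSpace Ω] (μ : Measure Ω) [IsProbabilityMeasure μ]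
    (m : ℕ) (U : Fin m → Ω → ℝ) (hUmeas : ∀ i, Measurable (U i))
    (hindep : iIndepFun U μ)
    (hunif : ∀ i, μ.map (U i) = (volume : Measure ℝ).restrict (Set.Icc 0 1))
    (γ : ℝ) (hγ0 : 0 < γ) (hγ1 : γ < 1) :
    μ {ω | ∃ k : Fin m,
        (fun i => U i ω) (Tuple.sort (fun i => U i ω) k)
          ≤ γ * ((k.val : ℝ) + 1) / (m : ℝ)} ≤ ENNReal.ofReal γ :=
  simes_stepdown_bound_general μ m U hindep hunif γ hγ0
end

section
/- Let Y ~ N(μ, Σ), η fixed with η^T Σ η > 0, ξ = Ση/(η^TΣη), z = (I − ξη^T)Y. For a fixed matrix A and vector b, the polyhedral event {AY ≤ b} can be rewritten, conditional on z, as {V^−(z) ≤ η^T Y ≤ V^+(z)} ∩ {(b − Az)_j ≥ 0 for all j with (Aξ)_j = 0}, where V^−(z) = max_{j:(Aξ)_j<0} (b_j − (Az)_j)/(Aξ)_j and V^+(z) = min_{j:(Aξ)_j>0} (b_j − (Az)_j)/(Aξ)_j. -/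
open Matrix

/-- **Polyhedral event as an interval constraint on `ηᵀY` given `z`.**
Let `ξ` satisfy `η ⬝ᵥ ξ = 1` (e.g. `ξ = Ση/(ηᵀΣη)`) and `z = Y − (η ⬝ᵥ Y) ξ`, so that
`Y = z + ξ (η ⬝ᵥ Y)`.  Then `{AY ≤ b}` holds iff `V⁻(z) ≤ η ⬝ᵥ Y ≤ V⁺(z)` and
`(b − Az)_j ≥ 0` for all `j` with `(Aξ)_j = 0`, where
`V⁻(z) = max_{j : (Aξ)_j < 0} (b_j − (Az)_j)/(Aξ)_j`
(equivalently, `(b_j − (Az)_j)/(Aξ)_j ≤ η ⬝ᵥ Y` for all such `j`) and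
`V⁺(z) = min_{j : (Aξ)_j > 0} (b_j − (Az)_j)/(Aξ)_j` (similarly). -/
theorem polyhedral_event_interval
    (T mdim : ℕ) (Y η ξ : Fin T → ℝ) (hηξ : η ⬝ᵥ ξ = 1)
    (z : Fin T → ℝ) (hz : z = Y - (η ⬝ᵥ Y) • ξ)
    (A : Matrix (Fin mdim) (Fin T) ℝ) (b : Fin mdim → ℝ) :
    (∀ j, A.mulVec Y j ≤ b j) ↔
      ((∀ j, A.mulVec ξ j < 0 →
          (b j - A.mulVec z j) / A.mulVec ξ j ≤ η ⬝ᵥ Y) ∧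
       (∀ j, 0 < A.mulVec ξ j →
          η ⬝ᵥ Y ≤ (b j - A.mulVec z j) / A.mulVec ξ j) ∧
       (∀ j, A.mulVec ξ j = 0 → 0 ≤ b j - A.mulVec z j)) := by
  have key : ∀ j, A.mulVec Y j = A.mulVec z j + (η ⬝ᵥ Y) * A.mulVec ξ j := by
    intro j
    subst hz
    simp [mulVec_sub, mulVec_smul, smul_eq_mul]
  constructor
  · intro h
    refine ⟨fun j hj => ?_, fun j hj => ?_, fun j hj => ?_⟩
    · rw [div_le_iff_of_neg hj]
      have := h j; rw [key j] at this; linarith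
    · rw [le_div_iff₀ hj]
      have := h j; rw [key j] at this; linarith
    · have := h j; rw [key j, hj] at this; linarith
  · rintro ⟨h1, h2, h3⟩ j
    rw [key j]
    rcases lt_trichotomy (A.mulVec ξ j) 0 with hj | hj | hj
    · have := h1 j hj; rw [div_le_iff_of_neg hj] at this; linarith
    · have := h3 j hj; rw [hj]; linarith
    · have := h2 j hj; rw [le_div_iff₀ hj] at this; linarith
end
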